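/- Let d ≥ 1 and let m, s, s' be real numbers with s' - s + m < -d/2. Let b : ℝ^d × ℝ^d → ℂ be continuous on ℝ^{2d} \ {0} and satisfy b(λp, λp') = λ^m · b(p,p') for every λ > 0 and (p,p') ≠ 0. Let φ : ℝ^d × ℝ^d → ℂ be measurable with |φ| ≤ 1 everywhere, and suppose there are constants ε > 0 and C > 0 such that φ(p,p') = 0 whenever |p|² + |p'|² < ε², and φ(p,p') = 0 whenever both |p| ≥ C and |p'| ≥ C. Then the function (p,p') ↦ (1 + |p|² + |p'|²)^{s'-s} · |b(p,p')|² · |φ(p,p')|² is integrable on ℝ^d × ℝ^d with respect to Lebesgue measure. -/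

import Mathlib

open MeasureTheory Real

lemma aux_scalar (m t ε C : ℝ) (hε : 0 < ε) (hC : 0 < C) :
    ∃ K : ℝ, 0 ≤ K ∧ ∀ a b : ℝ, 0 ≤ a → 0 ≤ b → b ≤ C → ε ^ 2 ≤ a ^ 2 + b ^ 2 →
      (1 + a ^ 2 + b ^ 2) ^ t * ((max a b) ^ 2) ^ m ≤ K * (1 + a ^ 2) ^ (t + m) := by
  set c : ℝ := min (ε ^ 2 / 2) 1 / 2 with hc
  have hcpos : 0 < c := by positivity
  set A : ℝ := max 1 ((1 + C ^ 2) ^ t) with hA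
  set B : ℝ := max (c ^ m) ((max 1 (C ^ 2)) ^ m) with hB
  refine ⟨A * B, by positivity, fun a b ha hb hbC hlow => ?_⟩
  have h1a : (0:ℝ) < 1 + a ^ 2 := by positivity
  -- Part 1 : (1+a²+b²)^t ≤ A * (1+a²)^t
  have part1 : (1 + a ^ 2 + b ^ 2) ^ t ≤ A * (1 + a ^ 2) ^ t := by
    rcases le_or_gt 0 t with ht | ht
    · have h2 : 1 + a ^ 2 + b ^ 2 ≤ (1 + C ^ 2) * (1 + a ^ 2) := by nlinarith
      calc (1 + a ^ 2 + b ^ 2) ^ t ≤ ((1 + C ^ 2) * (1 + a ^ 2)) ^ t :=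
            Real.rpow_le_rpow (by positivity) h2 ht
        _ = (1 + C ^ 2) ^ t * (1 + a ^ 2) ^ t :=
            Real.mul_rpow (by positivity) (by positivity)
        _ ≤ A * (1 + a ^ 2) ^ t := by
            apply mul_le_mul_of_nonneg_right (le_max_right _ _) (by positivity)
    · calc (1 + a ^ 2 + b ^ 2) ^ t ≤ (1 + a ^ 2) ^ t :=
            Real.rpow_le_rpow_of_nonpos h1a (by nlinarith) ht.le
        _ ≤ A * (1 + a ^ 2) ^ t := by
            nth_rewrite 1 [← one_mul ((1 + a ^ 2) ^ t)]
            exact mul_le_mul_of_nonneg_right (le_max_left _ _) (by positivity)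
  -- Part 2 : ((max a b)²)^m ≤ B * (1+a²)^m
  have hmax2 : (max a b) ^ 2 = max (a ^ 2) (b ^ 2) := by
    rcases le_total a b with h | h
    · rw [max_eq_right h, max_eq_right (by nlinarith)]
    · rw [max_eq_left h, max_eq_left (by nlinarith)]
  have hlo : c * (1 + a ^ 2) ≤ (max a b) ^ 2 := by
    rw [hmax2]
    have h1 : a ^ 2 ≤ max (a ^ 2) (b ^ 2) := le_max_left _ _
    have h2 : ε ^ 2 / 2 ≤ max (a ^ 2) (b ^ 2) := by
      rcases le_total (a ^ 2) (b ^ 2) with h | h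
      · rw [max_eq_right h]; nlinarith
      · rw [max_eq_left h]; nlinarith
    have hc1 : c ≤ ε ^ 2 / 2 / 2 := by
      rw [hc]; have := min_le_left (ε ^ 2 / 2) 1; linarith
    have hc2 : c ≤ 1 / 2 := by
      rw [hc]; have := min_le_right (ε ^ 2 / 2) 1; linarith
    nlinarith
  have hhi : (max a b) ^ 2 ≤ max 1 (C ^ 2) * (1 + a ^ 2) := by
    rw [hmax2]
    rcases le_total (a ^ 2) (b ^ 2) with h | h
    · rw [max_eq_right h]
      have : b ^ 2 ≤ C ^ 2 := by nlinarith
      have h1 : C ^ 2 ≤ max 1 (C ^ 2) := le_max_right _ _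
      nlinarith [le_max_right 1 (C ^ 2), sq_nonneg a]
    · rw [max_eq_left h]
      nlinarith [le_max_left 1 (C ^ 2), sq_nonneg a]
  have part2 : ((max a b) ^ 2) ^ m ≤ B * (1 + a ^ 2) ^ m := by
    rcases le_or_gt 0 m with hm | hm
    · calc ((max a b) ^ 2) ^ m ≤ (max 1 (C ^ 2) * (1 + a ^ 2)) ^ m :=
            Real.rpow_le_rpow (by positivity) hhi hm
        _ = (max 1 (C ^ 2)) ^ m * (1 + a ^ 2) ^ m :=
            Real.mul_rpow (by positivity) (by positivity)
        _ ≤ B * (1 + a ^ 2) ^ m :=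
            mul_le_mul_of_nonneg_right (le_max_right _ _) (by positivity)
    · calc ((max a b) ^ 2) ^ m ≤ (c * (1 + a ^ 2)) ^ m :=
            Real.rpow_le_rpow_of_nonpos (by positivity) hlo hm.le
        _ = c ^ m * (1 + a ^ 2) ^ m :=
            Real.mul_rpow (by positivity) (by positivity)
        _ ≤ B * (1 + a ^ 2) ^ m :=
            mul_le_mul_of_nonneg_right (le_max_left _ _) (by positivity)
  calc (1 + a ^ 2 + b ^ 2) ^ t * ((max a b) ^ 2) ^ m
      ≤ (A * (1 + a ^ 2) ^ t) * (B * (1 + a ^ 2) ^ m) := by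
        apply mul_le_mul part1 part2 (by positivity) (by positivity)
    _ = (A * B) * ((1 + a ^ 2) ^ t * (1 + a ^ 2) ^ m) := by ring
    _ = (A * B) * (1 + a ^ 2) ^ (t + m) := by
        rw [← Real.rpow_add h1a]

lemma aux_hom_bound {Z : Type*} [NormedAddCommGroup Z] [NormedSpace ℝ Z]
    [ProperSpace Z] (m : ℝ) (b : Z → ℂ)
    (hbcont : ContinuousOn b {z : Z | z ≠ 0})
    (hbhom : ∀ l : ℝ, 0 < l → ∀ z : Z, z ≠ 0 → b (l • z) = (l ^ m : ℝ) • b z) :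
    ∃ M : ℝ, 0 ≤ M ∧ ∀ z : Z, z ≠ 0 → ‖b z‖ ≤ M * ‖z‖ ^ m := by
  have hsph : IsCompact (Metric.sphere (0:Z) 1) := isCompact_sphere 0 1
  have hsub : Metric.sphere (0:Z) 1 ⊆ {z : Z | z ≠ 0} := by
    intro z hz
    simp only [Metric.mem_sphere, dist_zero_right] at hz
    simp only [Set.mem_setOf_eq]
    intro h; rw [h] at hz; simp at hz
  obtain ⟨M, hM⟩ := hsph.exists_bound_of_continuousOn (hbcont.mono hsub)
  refine ⟨max M 0, le_max_right _ _, fun z hz => ?_⟩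
  have hnz : (0:ℝ) < ‖z‖ := norm_pos_iff.2 hz
  set u : Z := ‖z‖⁻¹ • z with hu
  have hun : ‖u‖ = 1 := by
    rw [hu, norm_smul, norm_inv, norm_norm, inv_mul_cancel₀ hnz.ne']
  have hu0 : u ≠ 0 := by
    intro h; rw [h] at hun; simp at hun
  have hzu : z = ‖z‖ • u := by
    rw [hu, smul_smul, mul_inv_cancel₀ hnz.ne', one_smul]
  have hbz : b z = (‖z‖ ^ m : ℝ) • b u := by
    conv_lhs => rw [hzu]
    exact hbhom ‖z‖ hnz u hu0
  rw [hbz]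
  rw [Complex.real_smul, norm_mul, Complex.norm_real, Real.norm_eq_abs, abs_of_nonneg (Real.rpow_nonneg hnz.le m)]
  rw [mul_comm]
  apply mul_le_mul_of_nonneg_right _ (Real.rpow_nonneg hnz.le m)
  calc ‖b u‖ = ‖b u‖ := rfl
    _ ≤ M := hM u (by simpa [Metric.mem_sphere, dist_zero_right] using hun)
    _ ≤ max M 0 := le_max_left _ _

/-- The core integrability estimate: if `b` is continuous on `ℝ^{2d} \ {0}` and positively
homogeneous of degree `m`, `|φ| ≤ 1` vanishes near the origin and on the set where both
`|p| ≥ C` and `|p'| ≥ C`, and `s' - s + m < -d/2`, then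
`(1+|p|²+|p'|²)^{s'-s} |b|² |φ|²` is integrable on `ℝ^d × ℝ^d`. -/
theorem cutoff_difference_integrable (d : ℕ) (hd : 1 ≤ d) (m s s' : ℝ)
    (hexp : s' - s + m < -(d : ℝ) / 2)
    (b : EuclideanSpace ℝ (Fin d) × EuclideanSpace ℝ (Fin d) → ℂ)
    (hbcont : ContinuousOn b {z : EuclideanSpace ℝ (Fin d) × EuclideanSpace ℝ (Fin d) | z ≠ 0})
    (hbhom : ∀ l : ℝ, 0 < l → ∀ z : EuclideanSpace ℝ (Fin d) × EuclideanSpace ℝ (Fin d),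
      z ≠ 0 → b (l • z) = (l ^ m : ℝ) • b z)
    (φ : EuclideanSpace ℝ (Fin d) × EuclideanSpace ℝ (Fin d) → ℂ)
    (hφmeas : Measurable φ)
    (hφle : ∀ z, ‖φ z‖ ≤ 1)
    (ε C : ℝ) (hε : 0 < ε) (hC : 0 < C)
    (hφ0 : ∀ p p' : EuclideanSpace ℝ (Fin d), ‖p‖ ^ 2 + ‖p'‖ ^ 2 < ε ^ 2 → φ (p, p') = 0)
    (hφinf : ∀ p p' : EuclideanSpace ℝ (Fin d), C ≤ ‖p‖ → C ≤ ‖p'‖ → φ (p, p') = 0) :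
    Integrable (fun z : EuclideanSpace ℝ (Fin d) × EuclideanSpace ℝ (Fin d) =>
      (1 + ‖z.1‖ ^ 2 + ‖z.2‖ ^ 2) ^ (s' - s) * ‖b z‖ ^ 2 * ‖φ z‖ ^ 2)
      volume := by
  haveI : Nonempty (Fin d) := ⟨⟨0, hd⟩⟩
  haveI : Nontrivial (EuclideanSpace ℝ (Fin d)) := by
    refine ⟨EuclideanSpace.single ⟨0, hd⟩ (1:ℝ), 0, fun h => ?_⟩
    have h2 := congrArg (fun v : EuclideanSpace ℝ (Fin d) => v ⟨0, hd⟩) h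
    simp [EuclideanSpace.single_apply] at h2
  -- the singleton {0} in the product is null
  have hsing : (volume : Measure (EuclideanSpace ℝ (Fin d) × EuclideanSpace ℝ (Fin d))) {0} = 0 := by
    rw [Measure.volume_eq_prod _ _, show ({0} : Set (EuclideanSpace ℝ (Fin d) × EuclideanSpace ℝ (Fin d)))
      = {(0 : EuclideanSpace ℝ (Fin d))} ×ˢ {(0 : EuclideanSpace ℝ (Fin d))} from
      (Set.singleton_prod_singleton).symm, Measure.prod_prod, measure_singleton, zero_mul]
  have hmeasS : MeasurableSet {z : EuclideanSpace ℝ (Fin d) × EuclideanSpace ℝ (Fin d) | z ≠ 0} := by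
    rw [show {z : EuclideanSpace ℝ (Fin d) × EuclideanSpace ℝ (Fin d) | z ≠ 0}
      = ({0} : Set (EuclideanSpace ℝ (Fin d) × EuclideanSpace ℝ (Fin d)))ᶜ from by ext z; simp]
    exact (measurableSet_singleton 0).compl
  have hres : (volume : Measure (EuclideanSpace ℝ (Fin d) × EuclideanSpace ℝ (Fin d))).restrict
      {z | z ≠ 0} = volume := by
    apply Measure.restrict_eq_self_of_ae_mem
    rw [ae_iff]
    rw [show {x : EuclideanSpace ℝ (Fin d) × EuclideanSpace ℝ (Fin d) | ¬ x ∈ {z | z ≠ 0}}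
      = ({0} : Set (EuclideanSpace ℝ (Fin d) × EuclideanSpace ℝ (Fin d))) from by ext z; simp]
    exact hsing
  have hbAESM : AEStronglyMeasurable b volume := by
    have h := hbcont.aestronglyMeasurable (μ := volume) hmeasS
    rwa [hres] at h
  obtain ⟨M, hM0, hMb⟩ := aux_hom_bound m b hbcont hbhom
  obtain ⟨K, hK0, hK⟩ := aux_scalar m (s' - s) ε C hε hC
  set g : EuclideanSpace ℝ (Fin d) → ℝ := fun p => (1 + ‖p‖ ^ 2) ^ (s' - s + m) with hgdef
  set χ : EuclideanSpace ℝ (Fin d) → ℝ :=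
    (Metric.closedBall (0 : EuclideanSpace ℝ (Fin d)) C).indicator (fun _ => 1) with hχdef
  have hgnn : ∀ p, 0 ≤ g p := fun p => Real.rpow_nonneg (by positivity) _
  have hχnn : ∀ p, 0 ≤ χ p := fun p => Set.indicator_nonneg (fun _ _ => zero_le_one) p
  have hg_int : Integrable g := by
    have hnr : (Module.finrank ℝ (EuclideanSpace ℝ (Fin d)) : ℝ) < -(2 * (s' - s + m)) := by
      rw [finrank_euclideanSpace_fin]; linarith
    have h := integrable_rpow_neg_one_add_norm_sq
      (E := EuclideanSpace ℝ (Fin d)) (μ := volume) hnr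
    simpa [show -(-(2 * (s' - s + m))) / 2 = s' - s + m by ring] using h
  have hχ_int : Integrable χ := by
    rw [hχdef, integrable_indicator_iff measurableSet_closedBall]
    exact integrableOn_const measure_closedBall_lt_top.ne
  set G : EuclideanSpace ℝ (Fin d) × EuclideanSpace ℝ (Fin d) → ℝ :=
    fun z => (M ^ 2 * K) * (χ z.1 * g z.2) + (M ^ 2 * K) * (g z.1 * χ z.2) with hGdef
  have hG_int : Integrable G volume := by
    rw [hGdef, Measure.volume_eq_prod _ _]
    exact ((hχ_int.mul_prod hg_int).const_mul _).add ((hg_int.mul_prod hχ_int).const_mul _)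
  have hfAESM : AEStronglyMeasurable
      (fun z : EuclideanSpace ℝ (Fin d) × EuclideanSpace ℝ (Fin d) =>
        (1 + ‖z.1‖ ^ 2 + ‖z.2‖ ^ 2) ^ (s' - s) * ‖b z‖ ^ 2
          * ‖φ z‖ ^ 2) volume := by
    have h1 : Continuous (fun z : EuclideanSpace ℝ (Fin d) × EuclideanSpace ℝ (Fin d) =>
        (1 + ‖z.1‖ ^ 2 + ‖z.2‖ ^ 2) ^ (s' - s)) := by
      apply Continuous.rpow_const (by fun_prop)
      intro z; left; positivity
    have h2 : AEStronglyMeasurable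
        (fun z : EuclideanSpace ℝ (Fin d) × EuclideanSpace ℝ (Fin d) =>
          ‖b z‖ ^ 2) volume := by
      exact (hbAESM.norm.mul hbAESM.norm).congr (Filter.Eventually.of_forall fun z => (sq ‖b z‖).symm)
    have h3 : AEStronglyMeasurable
        (fun z : EuclideanSpace ℝ (Fin d) × EuclideanSpace ℝ (Fin d) =>
          ‖φ z‖ ^ 2) volume := by
      exact ((hφmeas.norm.pow_const 2).aestronglyMeasurable)
    exact (h1.aestronglyMeasurable.mul h2).mul h3
  apply hG_int.mono' hfAESM
  refine Filter.Eventually.of_forall ?_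
  rintro ⟨p, p'⟩
  have hGnn : 0 ≤ G (p, p') := by
    apply add_nonneg <;>
      exact mul_nonneg (by positivity) (mul_nonneg (by first | exact hχnn _ | exact hgnn _)
        (by first | exact hgnn _ | exact hχnn _))
  rw [Real.norm_eq_abs, abs_of_nonneg (by positivity)]
  rcases eq_or_ne (φ (p, p')) 0 with hφz | hφz
  · simp only [hφz, map_zero]
    simpa using hGnn
  · have hlow : ε ^ 2 ≤ ‖p‖ ^ 2 + ‖p'‖ ^ 2 := le_of_not_gt (fun h => hφz (hφ0 p p' h))
    have hz0 : ((p, p') : EuclideanSpace ℝ (Fin d) × EuclideanSpace ℝ (Fin d)) ≠ 0 := by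
      intro h
      rw [Prod.mk_eq_zero] at h
      rw [h.1, h.2] at hlow
      simp at hlow
      nlinarith
    have hcase : ‖p‖ < C ∨ ‖p'‖ < C := by
      by_contra h; push_neg at h; exact hφz (hφinf p p' h.1 h.2)
    have hφ1 : ‖φ (p, p')‖ ^ 2 ≤ 1 :=
      pow_le_one₀ (norm_nonneg _) (hφle _)
    have hx : (0:ℝ) < ‖((p, p') : EuclideanSpace ℝ (Fin d) × EuclideanSpace ℝ (Fin d))‖ :=
      norm_pos_iff.2 hz0
    have hnorm : ‖((p, p') : EuclideanSpace ℝ (Fin d) × EuclideanSpace ℝ (Fin d))‖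
        = max ‖p‖ ‖p'‖ := rfl
    have hb2 : ‖b (p, p')‖ ^ 2 ≤ M ^ 2 * ((max ‖p‖ ‖p'‖) ^ 2) ^ m := by
      calc ‖b (p, p')‖ ^ 2
          ≤ (M * ‖((p, p') : EuclideanSpace ℝ (Fin d) × EuclideanSpace ℝ (Fin d))‖ ^ m) ^ 2 :=
            pow_le_pow_left₀ (norm_nonneg _) (hMb _ hz0) 2
        _ = M ^ 2 * ((max ‖p‖ ‖p'‖) ^ 2) ^ m := by
            rw [mul_pow, hnorm]
            congr 1
            rw [← Real.rpow_natCast (max ‖p‖ ‖p'‖ ^ m) 2, ← Real.rpow_natCast (max ‖p‖ ‖p'‖) 2,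
              ← Real.rpow_mul (le_max_of_le_left (norm_nonneg p)),
              ← Real.rpow_mul (le_max_of_le_left (norm_nonneg p))]
            norm_num
            rw [mul_comm]
    have key : (1 + ‖p‖ ^ 2 + ‖p'‖ ^ 2) ^ (s' - s) * ‖b (p, p')‖ ^ 2
        * ‖φ (p, p')‖ ^ 2
        ≤ M ^ 2 * ((1 + ‖p‖ ^ 2 + ‖p'‖ ^ 2) ^ (s' - s) * ((max ‖p‖ ‖p'‖) ^ 2) ^ m) := by
      calc (1 + ‖p‖ ^ 2 + ‖p'‖ ^ 2) ^ (s' - s) * ‖b (p, p')‖ ^ 2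
            * ‖φ (p, p')‖ ^ 2
          ≤ (1 + ‖p‖ ^ 2 + ‖p'‖ ^ 2) ^ (s' - s) * ‖b (p, p')‖ ^ 2 * 1 := by
            apply mul_le_mul_of_nonneg_left hφ1 (by positivity)
        _ = (1 + ‖p‖ ^ 2 + ‖p'‖ ^ 2) ^ (s' - s) * ‖b (p, p')‖ ^ 2 := mul_one _
        _ ≤ (1 + ‖p‖ ^ 2 + ‖p'‖ ^ 2) ^ (s' - s) * (M ^ 2 * ((max ‖p‖ ‖p'‖) ^ 2) ^ m) := by
            apply mul_le_mul_of_nonneg_left hb2 (Real.rpow_nonneg (by positivity) _)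
        _ = M ^ 2 * ((1 + ‖p‖ ^ 2 + ‖p'‖ ^ 2) ^ (s' - s) * ((max ‖p‖ ‖p'‖) ^ 2) ^ m) := by ring
    rcases hcase with hcase | hcase
    · -- ‖p‖ < C : use the term  χ z.1 * g z.2
      have hsc := hK ‖p'‖ ‖p‖ (norm_nonneg _) (norm_nonneg _) hcase.le (by linarith)
      rw [show (1:ℝ) + ‖p'‖ ^ 2 + ‖p‖ ^ 2 = 1 + ‖p‖ ^ 2 + ‖p'‖ ^ 2 by ring,
        max_comm ‖p'‖ ‖p‖] at hsc
      have hχp : χ p = 1 := by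
        rw [hχdef]
        exact Set.indicator_of_mem (by
          simpa [Metric.mem_closedBall, dist_zero_right] using hcase.le) _
      have hterm2 : 0 ≤ (M ^ 2 * K) * (g p * χ p') :=
        mul_nonneg (by positivity) (mul_nonneg (hgnn _) (hχnn _))
      calc (1 + ‖p‖ ^ 2 + ‖p'‖ ^ 2) ^ (s' - s) * ‖b (p, p')‖ ^ 2
            * ‖φ (p, p')‖ ^ 2
          ≤ M ^ 2 * ((1 + ‖p‖ ^ 2 + ‖p'‖ ^ 2) ^ (s' - s) * ((max ‖p‖ ‖p'‖) ^ 2) ^ m) := key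
        _ ≤ M ^ 2 * (K * (1 + ‖p'‖ ^ 2) ^ (s' - s + m)) := by
            apply mul_le_mul_of_nonneg_left hsc (by positivity)
        _ = (M ^ 2 * K) * (χ p * g p') := by rw [hχp, hgdef]; ring
        _ ≤ G (p, p') := by rw [hGdef]; dsimp only; linarith
    · -- ‖p'‖ < C : use the term  g z.1 * χ z.2
      have hsc := hK ‖p‖ ‖p'‖ (norm_nonneg _) (norm_nonneg _) hcase.le hlow
      have hχp : χ p' = 1 := by
        rw [hχdef]
        exact Set.indicator_of_mem (by
          simpa [Metric.mem_closedBall, dist_zero_right] using hcase.le) _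
      have hterm1 : 0 ≤ (M ^ 2 * K) * (χ p * g p') :=
        mul_nonneg (by positivity) (mul_nonneg (hχnn _) (hgnn _))
      calc (1 + ‖p‖ ^ 2 + ‖p'‖ ^ 2) ^ (s' - s) * ‖b (p, p')‖ ^ 2
            * ‖φ (p, p')‖ ^ 2
          ≤ M ^ 2 * ((1 + ‖p‖ ^ 2 + ‖p'‖ ^ 2) ^ (s' - s) * ((max ‖p‖ ‖p'‖) ^ 2) ^ m) := key
        _ ≤ M ^ 2 * (K * (1 + ‖p‖ ^ 2) ^ (s' - s + m)) := by
            apply mul_le_mul_of_nonneg_left hsc (by positivity)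
        _ = (M ^ 2 * K) * (g p * χ p') := by rw [hχp, hgdef]; ring
        _ ≤ G (p, p') := by rw [hGdef]; dsimp only; linarith
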